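/- arXiv:1612.02702 — 2 statements merged into one kernel-verified Lean document; each statement's English description precedes it below -/
import Mathlib

section
/- Let (X, μ) be a measure space, let H = L²_ℂ(X, μ), and let (φₙ)_{n∈ℕ} be an orthonormal basis of H. Then the family of vectors Φₙ⁻ = (1/√2)·(φₙ, −conj φₙ) and Φₙ⁺ = (1/√2)·(φₙ, conj φₙ), n ∈ ℕ, is an orthonormal basis of the Hilbert direct sum H ⊕ H. -/
open MeasureTheory

/-- Pointwise complex conjugation on `L²_ℂ(X, μ)`. -/
noncomputable def lpConj {X : Type*} [MeasurableSpace X] {μ : Measure X} (f : Lp ℂ 2 μ) :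
    Lp ℂ 2 μ :=
  ((starL' ℝ : ℂ ≃L[ℝ] ℂ).toContinuousLinearMap).compLp f

/-!
The family `Φₙ^∓ = (ψₙ, ∓χₙ)/√2` is obtained from the orthonormal basis `(ψₙ, 0), (0, χₙ)` of
`E ⊕ F` by rotating each plane `span {(ψₙ, 0), (0, χₙ)}` by 45°, so it is again an orthonormal
basis. Conjugation on `L²` is antiunitary and involutive, so `(conj φₙ)` is an orthonormal basis
whenever `(φₙ)` is, and the theorem is the case `ψ = φ`, `χ = conj ∘ φ`.
-/

open Submodule

section InnerProductSpace

variable {𝕜 E F ι : Type*} [RCLike 𝕜] [NormedAddCommGroup E] [InnerProductSpace 𝕜 E]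
  [NormedAddCommGroup F] [InnerProductSpace 𝕜 F]

theorem mem_orthogonal_span_range_iff (v : ι → E) (x : E) :
    x ∈ (span 𝕜 (Set.range v))ᗮ ↔ ∀ i, inner 𝕜 (v i) x = 0 := by
  have : x ∈ (span 𝕜 (Set.range v))ᗮ ↔ span 𝕜 (Set.range v) ≤ (𝕜 ∙ x)ᗮ := by
    rw [mem_orthogonal', SetLike.le_def]
    simp only [mem_orthogonal_singleton_iff_inner_right]
  rw [this, span_le, Set.range_subset_iff]
  simp only [SetLike.mem_coe, mem_orthogonal_singleton_iff_inner_left]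

theorem topologicalClosure_span_range_eq_top_iff [CompleteSpace E] (v : ι → E) :
    (span 𝕜 (Set.range v)).topologicalClosure = ⊤ ↔
      ∀ x, (∀ i, inner 𝕜 (v i) x = 0) → x = 0 := by
  rw [topologicalClosure_eq_top_iff, eq_bot_iff]
  simp only [SetLike.le_def, mem_orthogonal_span_range_iff, mem_bot]

variable (𝕜) in
noncomputable def liftedFamily (ψ : ι → E) (χ : ι → F) : ι ⊕ ι → WithLp 2 (E × F) :=
  Sum.elim (fun i => (√2 : 𝕜)⁻¹ • WithLp.toLp 2 (ψ i, -χ i))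
    (fun i => (√2 : 𝕜)⁻¹ • WithLp.toLp 2 (ψ i, χ i))

theorem inner_sqrt_two_inv_smul_sqrt_two_inv_smul (x y : E) :
    inner 𝕜 ((√2 : 𝕜)⁻¹ • x) ((√2 : 𝕜)⁻¹ • y) = inner 𝕜 x y / 2 := by
  rw [inner_smul_left, inner_smul_right, ← mul_assoc, map_inv₀, RCLike.conj_ofReal, ← mul_inv,
    ← RCLike.ofReal_mul, Real.mul_self_sqrt zero_le_two, RCLike.ofReal_ofNat, div_eq_inv_mul]

theorem orthonormal_liftedFamily {ψ : ι → E} {χ : ι → F} (hψ : Orthonormal 𝕜 ψ)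
    (hχ : Orthonormal 𝕜 χ) : Orthonormal 𝕜 (liftedFamily 𝕜 ψ χ) := by
  classical
  rw [orthonormal_iff_ite] at hψ hχ ⊢
  rintro (i | i) (j | j) <;>
    simp only [liftedFamily, Sum.elim_inl, Sum.elim_inr, inner_sqrt_two_inv_smul_sqrt_two_inv_smul,
      WithLp.prod_inner_apply, inner_neg_left, inner_neg_right, hψ, hχ, Sum.inl.injEq,
      Sum.inr.injEq, reduceCtorEq, if_false] <;>
    split_ifs <;> ring

theorem inner_liftedFamily_inl (ψ : ι → E) (χ : ι → F) (i : ι) (v : WithLp 2 (E × F)) :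
    inner 𝕜 (liftedFamily 𝕜 ψ χ (.inl i)) v =
      (√2 : 𝕜)⁻¹ * (inner 𝕜 (ψ i) v.fst - inner 𝕜 (χ i) v.snd) := by
  simp [liftedFamily, inner_smul_left, WithLp.prod_inner_apply, sub_eq_add_neg]

theorem inner_liftedFamily_inr (ψ : ι → E) (χ : ι → F) (i : ι) (v : WithLp 2 (E × F)) :
    inner 𝕜 (liftedFamily 𝕜 ψ χ (.inr i)) v =
      (√2 : 𝕜)⁻¹ * (inner 𝕜 (ψ i) v.fst + inner 𝕜 (χ i) v.snd) := by
  simp [liftedFamily, inner_smul_left, WithLp.prod_inner_apply]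

theorem topologicalClosure_span_liftedFamily [CompleteSpace E] [CompleteSpace F]
    {ψ : ι → E} {χ : ι → F} (hψ : (span 𝕜 (Set.range ψ)).topologicalClosure = ⊤)
    (hχ : (span 𝕜 (Set.range χ)).topologicalClosure = ⊤) :
    (span 𝕜 (Set.range (liftedFamily 𝕜 ψ χ))).topologicalClosure = ⊤ := by
  rw [topologicalClosure_span_range_eq_top_iff] at hψ hχ ⊢
  intro v hv
  have hc : (√2 : 𝕜)⁻¹ ≠ 0 := by simp
  have hdiff i : inner 𝕜 (ψ i) v.fst - inner 𝕜 (χ i) v.snd = 0 := by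
    simpa only [inner_liftedFamily_inl, mul_eq_zero, hc, false_or] using hv (.inl i)
  have hsum i : inner 𝕜 (ψ i) v.fst + inner 𝕜 (χ i) v.snd = 0 := by
    simpa only [inner_liftedFamily_inr, mul_eq_zero, hc, false_or] using hv (.inr i)
  have hfst : v.fst = 0 := hψ _ fun i => by linear_combination (hsum i + hdiff i) / 2
  have hsnd : v.snd = 0 := hχ _ fun i => by linear_combination (hsum i - hdiff i) / 2
  exact WithLp.ofLp_injective 2 (Prod.ext hfst hsnd)

end InnerProductSpace

section lpConj

variable {X ι : Type*} [MeasurableSpace X] {μ : Measure X}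

theorem lpConj_coeFn (f : Lp ℂ 2 μ) : lpConj f =ᵐ[μ] fun x => starRingEnd ℂ (f x) := by
  filter_upwards [ContinuousLinearMap.coeFn_compLp
    ((starL' ℝ : ℂ ≃L[ℝ] ℂ).toContinuousLinearMap) f] with x hx
  simpa [lpConj] using hx

theorem inner_lpConj_lpConj (f g : Lp ℂ 2 μ) :
    inner ℂ (lpConj f) (lpConj g) = inner ℂ g f := by
  rw [L2.inner_def, L2.inner_def]
  refine integral_congr_ae ?_
  filter_upwards [lpConj_coeFn f, lpConj_coeFn g] with x hf hg
  simp [hf, hg, mul_comm]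

theorem inner_lpConj_left_swap (f g : Lp ℂ 2 μ) : inner ℂ (lpConj f) g = inner ℂ (lpConj g) f := by
  rw [L2.inner_def, L2.inner_def]
  refine integral_congr_ae ?_
  filter_upwards [lpConj_coeFn f, lpConj_coeFn g] with x hf hg
  simp [hf, hg, mul_comm]

theorem Orthonormal.lpConj_comp {φ : ι → Lp ℂ 2 μ} (hφ : Orthonormal ℂ φ) :
    Orthonormal ℂ (lpConj ∘ φ) := by
  classical
  rw [orthonormal_iff_ite] at hφ ⊢
  intro i j
  simp only [Function.comp_apply, inner_lpConj_lpConj, hφ, eq_comm]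

theorem topologicalClosure_span_lpConj_comp {φ : ι → Lp ℂ 2 μ}
    (hφ : (span ℂ (Set.range φ)).topologicalClosure = ⊤) :
    (span ℂ (Set.range (lpConj ∘ φ))).topologicalClosure = ⊤ := by
  rw [topologicalClosure_span_range_eq_top_iff] at hφ ⊢
  intro f hf
  have hconj : lpConj f = 0 := hφ _ fun i => by
    rw [← inner_conj_symm, inner_lpConj_left_swap, ← Function.comp_apply (f := lpConj), hf i,
      map_zero]
  rw [← inner_self_eq_zero (𝕜 := ℂ), ← inner_lpConj_lpConj, hconj, inner_zero_left]

end lpConj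

/-- The lifted family `Φₙ⁻ = (1/√2)(φₙ, −conj φₙ)`, `Φₙ⁺ = (1/√2)(φₙ, conj φₙ)` built from
an orthonormal basis `(φₙ)` of `H = L²_ℂ(X, μ)` is an orthonormal basis of `H ⊕ H`. -/
theorem lifted_orthonormal_basis {X : Type*} [MeasurableSpace X] (μ : Measure X)
    (φ : ℕ → Lp ℂ 2 μ)
    (horth : Orthonormal ℂ φ)
    (hspan : (Submodule.span ℂ (Set.range φ)).topologicalClosure = ⊤)
    (Φ : ℕ ⊕ ℕ → WithLp 2 (Lp ℂ 2 μ × Lp ℂ 2 μ))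
    (hΦminus : ∀ n : ℕ, Φ (Sum.inl n) =
      (Real.sqrt 2)⁻¹ • (WithLp.equiv 2 (Lp ℂ 2 μ × Lp ℂ 2 μ)).symm (φ n, -lpConj (φ n)))
    (hΦplus : ∀ n : ℕ, Φ (Sum.inr n) =
      (Real.sqrt 2)⁻¹ • (WithLp.equiv 2 (Lp ℂ 2 μ × Lp ℂ 2 μ)).symm (φ n, lpConj (φ n))) :
    Orthonormal ℂ Φ ∧
      (Submodule.span ℂ (Set.range Φ)).topologicalClosure = ⊤ := by
  have hΦ : Φ = liftedFamily ℂ φ (lpConj ∘ φ) := by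
    funext n
    rcases n with n | n <;>
      simp only [hΦminus, hΦplus, RCLike.real_smul_eq_coe_smul (K := ℂ), RCLike.ofReal_inv] <;>
      rfl
  subst hΦ
  exact ⟨orthonormal_liftedFamily horth horth.lpConj_comp,
    topologicalClosure_span_liftedFamily hspan (topologicalClosure_span_lpConj_comp hspan)⟩
end

section
/- Let (X, μ) be a measure space, let H = L²_ℂ(X, μ), and let (φₙ)_{n∈ℕ} be a frame for H with lower frame bound A and upper frame bound B. Then the family of vectors Φₙ⁻ = (1/√2)·(φₙ, −conj φₙ) and Φₙ⁺ = (1/√2)·(φₙ, conj φₙ), n ∈ ℕ, is a frame for the Hilbert direct sum H ⊕ H with the same frame bounds A and B; that is, for all f₁, f₂ ∈ H, A·(‖f₁‖² + ‖f₂‖²) ≤ Σ_{n∈ℕ} ( |⟨Φₙ⁻, (f₁,f₂)⟩|² + |⟨Φₙ⁺, (f₁,f₂)⟩|² ) ≤ B·(‖f₁‖² + ‖f₂‖²). -/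
/-!
With `a = ⟪φₙ, f₁⟫` and `b = ⟪φₙ, conj f₂⟫` one has `⟪conj φₙ, f₂⟫ = conj b`, so the two lifted
coefficients are `(a ∓ conj b) / √2` and, by the parallelogram law, their squared moduli add up
to `|a|² + |b|²`. The lifted frame sum of `(f₁, f₂)` is therefore the sum of the frame sums of
`f₁` and `conj f₂`, and conjugation preserves the `L²` norm.
-/

open MeasureTheory

open ComplexConjugate

lemma inner_smul_toLp_prod {𝕜 E F : Type*} [RCLike 𝕜] [NormedAddCommGroup E]
    [InnerProductSpace 𝕜 E] [NormedAddCommGroup F] [InnerProductSpace 𝕜 F]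
    [Module ℝ E] [IsScalarTower ℝ 𝕜 E] [Module ℝ F] [IsScalarTower ℝ 𝕜 F]
    (c : ℝ) (u f : E) (v g : F) :
    inner 𝕜 (c • (WithLp.equiv 2 (E × F)).symm (u, v)) ((WithLp.equiv 2 (E × F)).symm (f, g)) =
      c * (inner 𝕜 u f + inner 𝕜 v g) := by
  rw [RCLike.real_smul_eq_coe_smul (K := 𝕜), inner_smul_left, RCLike.conj_ofReal,
    WithLp.prod_inner_apply]
  rfl

lemma RCLike.norm_sq_sub_conj_add_norm_sq_add_conj {𝕜 : Type*} [RCLike 𝕜] (a b : 𝕜) :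
    ‖(((√2)⁻¹ : ℝ) : 𝕜) * (a - conj b)‖ ^ 2 + ‖(((√2)⁻¹ : ℝ) : 𝕜) * (a + conj b)‖ ^ 2 =
      ‖a‖ ^ 2 + ‖b‖ ^ 2 := by
  have hpar := parallelogram_law_with_norm 𝕜 a (conj b)
  rw [RCLike.norm_conj] at hpar
  have hc : ‖(((√2)⁻¹ : ℝ) : 𝕜)‖ ^ 2 = 2⁻¹ := by
    rw [RCLike.norm_ofReal, sq_abs, inv_pow, Real.sq_sqrt zero_le_two]
  rw [norm_mul, norm_mul, mul_pow, mul_pow, hc]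
  linarith

section LpConj

variable {X : Type*} [MeasurableSpace X] {μ : Measure X}

lemma coeFn_lpConj (f : Lp ℂ 2 μ) : lpConj f =ᵐ[μ] fun x => conj (f x) :=
  ContinuousLinearMap.coeFn_compLp' _ f

lemma norm_lpConj (f : Lp ℂ 2 μ) : ‖lpConj f‖ = ‖f‖ := by
  have h : ∀ᵐ x ∂μ, ‖lpConj f x‖ = ‖f x‖ := by
    filter_upwards [coeFn_lpConj f] with x hx
    rw [hx, RCLike.norm_conj]
  rw [Lp.norm_def, Lp.norm_def, eLpNorm_congr_norm_ae h]

lemma inner_lpConj_left (u v : Lp ℂ 2 μ) :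
    inner ℂ (lpConj u) v = conj (inner ℂ u (lpConj v)) := by
  rw [L2.inner_def, L2.inner_def, ← integral_conj]
  refine integral_congr_ae ?_
  filter_upwards [coeFn_lpConj u, coeFn_lpConj v] with x hu hv
  simp [hu, hv, mul_comm]

lemma norm_inner_lifted_sq_add (φ f₁ f₂ : Lp ℂ 2 μ) :
    ‖inner ℂ ((√2)⁻¹ • (WithLp.equiv 2 (Lp ℂ 2 μ × Lp ℂ 2 μ)).symm (φ, -lpConj φ))
        ((WithLp.equiv 2 (Lp ℂ 2 μ × Lp ℂ 2 μ)).symm (f₁, f₂))‖ ^ 2 +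
      ‖inner ℂ ((√2)⁻¹ • (WithLp.equiv 2 (Lp ℂ 2 μ × Lp ℂ 2 μ)).symm (φ, lpConj φ))
        ((WithLp.equiv 2 (Lp ℂ 2 μ × Lp ℂ 2 μ)).symm (f₁, f₂))‖ ^ 2 =
      ‖inner ℂ φ f₁‖ ^ 2 + ‖inner ℂ φ (lpConj f₂)‖ ^ 2 := by
  rw [inner_smul_toLp_prod, inner_smul_toLp_prod, inner_neg_left, inner_lpConj_left,
    ← sub_eq_add_neg]
  exact RCLike.norm_sq_sub_conj_add_norm_sq_add_conj _ _

end LpConj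

theorem lifted_frame_general {X : Type*} [MeasurableSpace X] (μ : Measure X)
    (φ : ℕ → Lp ℂ 2 μ) (A B : ℝ)
    (hframe : ∀ f : Lp ℂ 2 μ,
      Summable (fun n => ‖(inner ℂ (φ n) f : ℂ)‖ ^ 2) ∧
      A * ‖f‖ ^ 2 ≤ ∑' n : ℕ, ‖(inner ℂ (φ n) f : ℂ)‖ ^ 2 ∧
      ∑' n : ℕ, ‖(inner ℂ (φ n) f : ℂ)‖ ^ 2 ≤ B * ‖f‖ ^ 2)
    (Φminus Φplus : ℕ → WithLp 2 (Lp ℂ 2 μ × Lp ℂ 2 μ))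
    (hΦminus : ∀ n : ℕ, Φminus n =
      (Real.sqrt 2)⁻¹ • (WithLp.equiv 2 (Lp ℂ 2 μ × Lp ℂ 2 μ)).symm (φ n, -lpConj (φ n)))
    (hΦplus : ∀ n : ℕ, Φplus n =
      (Real.sqrt 2)⁻¹ • (WithLp.equiv 2 (Lp ℂ 2 μ × Lp ℂ 2 μ)).symm (φ n, lpConj (φ n))) :
    ∀ f₁ f₂ : Lp ℂ 2 μ,
      Summable (fun n =>
        ‖(inner ℂ (Φminus n) ((WithLp.equiv 2 (Lp ℂ 2 μ × Lp ℂ 2 μ)).symm (f₁, f₂)) : ℂ)‖ ^ 2 +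
        ‖(inner ℂ (Φplus n) ((WithLp.equiv 2 (Lp ℂ 2 μ × Lp ℂ 2 μ)).symm (f₁, f₂)) : ℂ)‖ ^ 2) ∧
      A * (‖f₁‖ ^ 2 + ‖f₂‖ ^ 2) ≤
        ∑' n : ℕ,
          (‖(inner ℂ (Φminus n) ((WithLp.equiv 2 (Lp ℂ 2 μ × Lp ℂ 2 μ)).symm (f₁, f₂)) : ℂ)‖ ^ 2 +
           ‖(inner ℂ (Φplus n) ((WithLp.equiv 2 (Lp ℂ 2 μ × Lp ℂ 2 μ)).symm (f₁, f₂)) : ℂ)‖ ^ 2) ∧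
      ∑' n : ℕ,
          (‖(inner ℂ (Φminus n) ((WithLp.equiv 2 (Lp ℂ 2 μ × Lp ℂ 2 μ)).symm (f₁, f₂)) : ℂ)‖ ^ 2 +
           ‖(inner ℂ (Φplus n) ((WithLp.equiv 2 (Lp ℂ 2 μ × Lp ℂ 2 μ)).symm (f₁, f₂)) : ℂ)‖ ^ 2) ≤
        B * (‖f₁‖ ^ 2 + ‖f₂‖ ^ 2) := by
  intro f₁ f₂
  obtain ⟨hsum₁, hlower₁, hupper₁⟩ := hframe f₁
  obtain ⟨hsum₂, hlower₂, hupper₂⟩ := hframe (lpConj f₂)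
  have hterm : ∀ n,
      ‖(inner ℂ (Φminus n) ((WithLp.equiv 2 (Lp ℂ 2 μ × Lp ℂ 2 μ)).symm (f₁, f₂)) : ℂ)‖ ^ 2 +
      ‖(inner ℂ (Φplus n) ((WithLp.equiv 2 (Lp ℂ 2 μ × Lp ℂ 2 μ)).symm (f₁, f₂)) : ℂ)‖ ^ 2 =
      ‖(inner ℂ (φ n) f₁ : ℂ)‖ ^ 2 + ‖(inner ℂ (φ n) (lpConj f₂) : ℂ)‖ ^ 2 := fun n => by
    rw [hΦminus, hΦplus, norm_inner_lifted_sq_add]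
  refine ⟨(hsum₁.add hsum₂).congr fun n => (hterm n).symm, ?_, ?_⟩ <;>
    rw [tsum_congr hterm, hsum₁.tsum_add hsum₂, mul_add, ← norm_lpConj f₂]
  · exact add_le_add hlower₁ hlower₂
  · exact add_le_add hupper₁ hupper₂

/-- Frame lifting: if `(φₙ)` is a frame for `H = L²_ℂ(X, μ)` with bounds `A ≤ B`, then the
family `Φₙ⁻ = (1/√2)(φₙ, −conj φₙ)`, `Φₙ⁺ = (1/√2)(φₙ, conj φₙ)` is a frame for the Hilbert
direct sum `H ⊕ H` with the same bounds. -/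
theorem lifted_frame {X : Type*} [MeasurableSpace X] (μ : Measure X)
    (φ : ℕ → Lp ℂ 2 μ) (A B : ℝ) (hA : 0 < A) (hAB : A ≤ B)
    (hframe : ∀ f : Lp ℂ 2 μ,
      Summable (fun n => ‖(inner ℂ (φ n) f : ℂ)‖ ^ 2) ∧
      A * ‖f‖ ^ 2 ≤ ∑' n : ℕ, ‖(inner ℂ (φ n) f : ℂ)‖ ^ 2 ∧
      ∑' n : ℕ, ‖(inner ℂ (φ n) f : ℂ)‖ ^ 2 ≤ B * ‖f‖ ^ 2)
    (Φminus Φplus : ℕ → WithLp 2 (Lp ℂ 2 μ × Lp ℂ 2 μ))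
    (hΦminus : ∀ n : ℕ, Φminus n =
      (Real.sqrt 2)⁻¹ • (WithLp.equiv 2 (Lp ℂ 2 μ × Lp ℂ 2 μ)).symm (φ n, -lpConj (φ n)))
    (hΦplus : ∀ n : ℕ, Φplus n =
      (Real.sqrt 2)⁻¹ • (WithLp.equiv 2 (Lp ℂ 2 μ × Lp ℂ 2 μ)).symm (φ n, lpConj (φ n))) :
    ∀ f₁ f₂ : Lp ℂ 2 μ,
      Summable (fun n =>
        ‖(inner ℂ (Φminus n) ((WithLp.equiv 2 (Lp ℂ 2 μ × Lp ℂ 2 μ)).symm (f₁, f₂)) : ℂ)‖ ^ 2 +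
        ‖(inner ℂ (Φplus n) ((WithLp.equiv 2 (Lp ℂ 2 μ × Lp ℂ 2 μ)).symm (f₁, f₂)) : ℂ)‖ ^ 2) ∧
      A * (‖f₁‖ ^ 2 + ‖f₂‖ ^ 2) ≤
        ∑' n : ℕ,
          (‖(inner ℂ (Φminus n) ((WithLp.equiv 2 (Lp ℂ 2 μ × Lp ℂ 2 μ)).symm (f₁, f₂)) : ℂ)‖ ^ 2 +
           ‖(inner ℂ (Φplus n) ((WithLp.equiv 2 (Lp ℂ 2 μ × Lp ℂ 2 μ)).symm (f₁, f₂)) : ℂ)‖ ^ 2) ∧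
      ∑' n : ℕ,
          (‖(inner ℂ (Φminus n) ((WithLp.equiv 2 (Lp ℂ 2 μ × Lp ℂ 2 μ)).symm (f₁, f₂)) : ℂ)‖ ^ 2 +
           ‖(inner ℂ (Φplus n) ((WithLp.equiv 2 (Lp ℂ 2 μ × Lp ℂ 2 μ)).symm (f₁, f₂)) : ℂ)‖ ^ 2) ≤
        B * (‖f₁‖ ^ 2 + ‖f₂‖ ^ 2) :=
  lifted_frame_general μ φ A B hframe Φminus Φplus hΦminus hΦplus
end
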